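/- Let ∂ : V → V be the boundary map of the 29-generator chain complex associated to the overtwisted contact structure on S³. Then ∂ ∘ ∂ = 0, the rank of ∂ equals 14, and the kernel of ∂ has dimension 15 over the field with two elements. -/

import Mathlib

/-- The basis vectors `X, A, B₁₁, B₁₂, B₂₁, B₂₂, C₁₁, C₁₂, C₂₁, C₂₂, D₁₁, D₁₂, D₂₁,
D₂₂, E₁, E₂, F₁, F₂, F₃, G₁, G₂, G₃, H₁, H₂, I₁, I₂, J, K₁, K₂` (in this order) of the
29-dimensional vector space `V = (Fin 29 → ZMod 2)` over the field with two elements. -/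
def e (i : Fin 29) : Fin 29 → ZMod 2 := Pi.single i 1

/-!
A differential `∂` on a space of dimension `n` has `im ∂ ⊆ ker ∂`, so rank-nullity gives
`2 · rank ∂ ≤ n`; for `n = 29` the rank is at most `14`. Conversely, the boundaries of
`B₁₂, C₁₁, C₁₂, D₁₁, D₁₂, D₂₂, F₁, A, G₁, G₃, H₁, B₁₁, K₁, K₂` are linearly independent, since
their coordinates at suitable pivot generators form a unitriangular matrix. Hence the rank is
exactly `14` and the kernel has dimension `29 - 14 = 15`.
-/

theorem LinearMap.two_mul_finrank_range_le_of_comp_self_eq_zero {K V : Type*} [DivisionRing K]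
    [AddCommGroup V] [Module K V] [FiniteDimensional K V] {f : V →ₗ[K] V} (hf : f ∘ₗ f = 0) :
    2 * Module.finrank K (LinearMap.range f) ≤ Module.finrank K V := by
  have hle : Module.finrank K (LinearMap.range f) ≤ Module.finrank K (LinearMap.ker f) :=
    Submodule.finrank_mono (LinearMap.range_le_ker_iff.2 hf)
  have := f.finrank_range_add_finrank_ker
  omega

theorem linearIndependent_of_triangular_pivots {K ι : Type*} [Field K] {k : ℕ}
    (v : Fin k → ι → K) (p : Fin k → ι) (hdiag : ∀ i, v i (p i) ≠ 0)
    (htri : ∀ i j, j < i → v i (p j) = 0) : LinearIndependent K v := by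
  set N : Matrix (Fin k) (Fin k) K := Matrix.of fun i j => v i (p j)
  have hN_upper : N.IsUpperTriangular := fun i j hji => htri i j hji
  have hN : N.det ≠ 0 := by
    rw [Matrix.det_of_isUpperTriangular hN_upper]
    exact Finset.prod_ne_zero_iff.2 fun i _ => hdiag i
  exact (Matrix.linearIndependent_rows_of_det_ne_zero hN).of_comp
    (LinearMap.funLeft K K p)

theorem le_finrank_range_of_linearIndependent {K V W : Type*} [DivisionRing K]
    [AddCommGroup V] [Module K V] [AddCommGroup W] [Module K W] [FiniteDimensional K W]
    {f : V →ₗ[K] W} {k : ℕ} {v : Fin k → W} (hv : LinearIndependent K v)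
    (hmem : ∀ i, v i ∈ LinearMap.range f) : k ≤ Module.finrank K (LinearMap.range f) := by
  calc k = Module.finrank K (Submodule.span K (Set.range v)) := by
        rw [finrank_span_eq_card hv, Fintype.card_fin]
    _ ≤ _ := Submodule.finrank_mono (Submodule.span_le.2 (Set.range_subset_iff.2 hmem))

def boundary : Fin 29 → Fin 29 → ZMod 2 :=
  ![0, e 0, e 4, e 0 + e 5, 0, 0, e 3 + e 8 + e 16, e 2 + e 9, e 5 + e 17, e 4,
    e 12, e 7 + e 13 + e 14, 0, e 9 + e 15, e 2 + e 15, e 4, e 0 + e 17, 0, e 0,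
    e 1 + e 10 + e 16 + e 20, e 12 + e 17, e 1 + e 18, e 1 + e 4 + e 26, e 5, e 17,
    e 18 + e 26, e 0, e 8 + e 23 + e 24, e 9 + e 21 + e 22 + e 25]

def boundaryMatrix : Matrix (Fin 29) (Fin 29) (ZMod 2) := Matrix.of fun i j => boundary j i

theorem boundaryMatrix_mul_self : boundaryMatrix * boundaryMatrix = 0 := by
  decide +kernel

theorem linearIndependent_boundary_comp :
    LinearIndependent (ZMod 2)
      (boundary ∘ ![3, 6, 7, 10, 11, 13, 16, 1, 19, 21, 22, 2, 27, 28]) :=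
  linearIndependent_of_triangular_pivots _ ![5, 3, 2, 12, 7, 15, 17, 0, 10, 18, 1, 4, 8, 9]
    (by decide) (by decide)

section

variable {D : (Fin 29 → ZMod 2) →ₗ[ZMod 2] (Fin 29 → ZMod 2)}

theorem toMatrix'_eq_boundaryMatrix (hD : ∀ i, D (e i) = boundary i) :
    LinearMap.toMatrix' D = boundaryMatrix := by
  ext i j
  exact congrFun (hD j) i

theorem comp_self_eq_zero_of_boundary (hD : ∀ i, D (e i) = boundary i) : D ∘ₗ D = 0 := by
  apply LinearMap.toMatrix'.injective
  rw [LinearMap.toMatrix'_comp, toMatrix'_eq_boundaryMatrix hD, boundaryMatrix_mul_self,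
    map_zero]

theorem finrank_range_eq_of_boundary (hD : ∀ i, D (e i) = boundary i) :
    Module.finrank (ZMod 2) (LinearMap.range D) = 14 := by
  have hle := LinearMap.two_mul_finrank_range_le_of_comp_self_eq_zero
    (comp_self_eq_zero_of_boundary hD)
  have hge := le_finrank_range_of_linearIndependent linearIndependent_boundary_comp
    fun i => ⟨_, hD _⟩
  rw [Module.finrank_fin_fun] at hle
  omega

end

/-- The boundary map `∂` of the 29-generator chain complex associated to the overtwisted
contact structure on `S³` satisfies `∂ ∘ ∂ = 0`, has rank `14`, and its kernel is
`15`-dimensional over the field with two elements. -/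
theorem stmt13 (D : (Fin 29 → ZMod 2) →ₗ[ZMod 2] (Fin 29 → ZMod 2))
    (hX : D (e 0) = 0)
    (hA : D (e 1) = e 0)
    (hB11 : D (e 2) = e 4)
    (hB12 : D (e 3) = e 0 + e 5)
    (hB21 : D (e 4) = 0)
    (hB22 : D (e 5) = 0)
    (hC11 : D (e 6) = e 3 + e 8 + e 16)
    (hC12 : D (e 7) = e 2 + e 9)
    (hC21 : D (e 8) = e 5 + e 17)
    (hC22 : D (e 9) = e 4)
    (hD11 : D (e 10) = e 12)
    (hD12 : D (e 11) = e 7 + e 13 + e 14)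
    (hD21 : D (e 12) = 0)
    (hD22 : D (e 13) = e 9 + e 15)
    (hE1 : D (e 14) = e 2 + e 15)
    (hE2 : D (e 15) = e 4)
    (hF1 : D (e 16) = e 0 + e 17)
    (hF2 : D (e 17) = 0)
    (hF3 : D (e 18) = e 0)
    (hG1 : D (e 19) = e 1 + e 10 + e 16 + e 20)
    (hG2 : D (e 20) = e 12 + e 17)
    (hG3 : D (e 21) = e 1 + e 18)
    (hH1 : D (e 22) = e 1 + e 4 + e 26)
    (hH2 : D (e 23) = e 5)
    (hI1 : D (e 24) = e 17)
    (hI2 : D (e 25) = e 18 + e 26)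
    (hJ : D (e 26) = e 0)
    (hK1 : D (e 27) = e 8 + e 23 + e 24)
    (hK2 : D (e 28) = e 9 + e 21 + e 22 + e 25)
    :
    D ∘ₗ D = 0 ∧
    Module.finrank (ZMod 2) ↥(LinearMap.range D) = 14 ∧
    Module.finrank (ZMod 2) ↥(LinearMap.ker D) = 15 := by
  have hD : ∀ i, D (e i) = boundary i := by
    intro i
    fin_cases i
    exacts [hX, hA, hB11, hB12, hB21, hB22, hC11, hC12, hC21, hC22, hD11, hD12, hD21, hD22,
      hE1, hE2, hF1, hF2, hF3, hG1, hG2, hG3, hH1, hH2, hI1, hI2, hJ, hK1, hK2]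
  have hrange := finrank_range_eq_of_boundary hD
  have hrank_nullity := D.finrank_range_add_finrank_ker
  rw [hrange, Module.finrank_fin_fun] at hrank_nullity
  exact ⟨comp_self_eq_zero_of_boundary hD, hrange, by omega⟩
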